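/- Suppose Λ(x) is positive definite, y ∈ ℝ^U, and 0 ≤ r₁ < r₂ with r₁ < 1/2 and ‖x − y‖_x ≤ r₁. Let N > 0 be a real number such that the operator 2-norm of H(x)^{1/2} (the positive-definite square root of H(x)) satisfies ‖H(x)^{1/2}‖ ≤ (2N/√U)·(r₂ − r₁)/(1 + r₂). Then every x_N ∈ ℝ^U with ‖x_N − x‖ ≤ √U/(2N) (e.g., the componentwise rounding of x to the nearest rational vector with denominator N) satisfies: Λ(x_N) is positive definite and ‖x_N − y‖_{x_N} ≤ r₂. -/

import Mathlib

open Matrix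

/-- The gradient of the barrier `f(x) = -log det Λ(x)`:
`g(x)_i = -tr(Λ(x)⁻¹ · Λ(e_i))` (with the total matrix inverse, `0` for singular matrices). -/
noncomputable def grad {U L : ℕ} (Lam : (Fin U → ℝ) →ₗ[ℝ] Matrix (Fin L) (Fin L) ℝ)
    (x : Fin U → ℝ) : Fin U → ℝ :=
  fun i => -((Lam x)⁻¹ * Lam (Pi.single i 1)).trace

/-- The Hessian of the barrier: `H(x)_{ij} = tr(Λ(x)⁻¹ Λ(e_i) Λ(x)⁻¹ Λ(e_j))`. -/
noncomputable def hess {U L : ℕ} (Lam : (Fin U → ℝ) →ₗ[ℝ] Matrix (Fin L) (Fin L) ℝ)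
    (x : Fin U → ℝ) : Matrix (Fin U) (Fin U) ℝ :=
  Matrix.of fun i j =>
    ((Lam x)⁻¹ * Lam (Pi.single i 1) * (Lam x)⁻¹ * Lam (Pi.single j 1)).trace

/-- The local norm `‖v‖_x = (vᵀ H(x) v)^{1/2}`. -/
noncomputable def locNorm {U L : ℕ} (Lam : (Fin U → ℝ) →ₗ[ℝ] Matrix (Fin L) (Fin L) ℝ)
    (x v : Fin U → ℝ) : ℝ :=
  Real.sqrt (v ⬝ᵥ (hess Lam x).mulVec v)

/-- The dual local norm `‖t‖*_x = (tᵀ H(x)⁻¹ t)^{1/2}`. -/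
noncomputable def dualNorm {U L : ℕ} (Lam : (Fin U → ℝ) →ₗ[ℝ] Matrix (Fin L) (Fin L) ℝ)
    (x t : Fin U → ℝ) : ℝ :=
  Real.sqrt (t ⬝ᵥ (hess Lam x)⁻¹.mulVec t)

/-! Write `xN = x + d` and `t = ‖d‖_x`. The bound on `H(x)^{1/2}` gives
`t ≤ (r₂ - r₁) / (1 + r₂) < 1`. For `S = Λ(x)^{-1/2} Λ(d) Λ(x)^{-1/2}` one has `tr(S²) = t²`,
and the Frobenius norm bounds the spectrum, so `Λ(xN) = Λ(x) + Λ(d) ⪰ (1 - t) Λ(x) ≻ 0`. Inverting,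
`Λ(xN)⁻¹ ⪯ (1 - t)⁻¹ Λ(x)⁻¹`, hence `H(xN) ⪯ (1 - t)⁻² H(x)` and `‖v‖_{xN} ≤ ‖v‖_x / (1 - t)`.
For `v = xN - y` the triangle inequality gives `‖v‖_x ≤ t + r₁`, and `(t + r₁) / (1 - t) ≤ r₂` is
exactly the bound on `t`. -/

open scoped MatrixOrder

namespace Matrix

variable {n : Type*} [Fintype n]

lemma sqrt_dotProduct_self_eq_norm (v : n → ℝ) : √(v ⬝ᵥ v) = ‖WithLp.toLp 2 v‖ := by
  rw [EuclideanSpace.norm_eq]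
  simp [dotProduct, sq]

lemma IsSymm.dotProduct_mulVec_comm {M : Matrix n n ℝ} (hM : M.IsSymm) (u v : n → ℝ) :
    u ⬝ᵥ M *ᵥ v = v ⬝ᵥ M *ᵥ u := by
  rw [dotProduct_mulVec, ← mulVec_transpose, hM.eq, dotProduct_comm]

lemma sq_dotProduct_mulVec_le (S : Matrix n n ℝ) (u : n → ℝ) :
    (u ⬝ᵥ S *ᵥ u) ^ 2 ≤ (Sᵀ * S).trace * (u ⬝ᵥ u) ^ 2 := by
  have hquad : u ⬝ᵥ S *ᵥ u = ∑ p : n × n, S p.1 p.2 * (u p.1 * u p.2) := by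
    simp only [Fintype.sum_prod_type, dotProduct, mulVec, Finset.mul_sum]
    exact Finset.sum_congr rfl fun i _ => Finset.sum_congr rfl fun j _ => by ring
  have htrace : (Sᵀ * S).trace = ∑ p : n × n, S p.1 p.2 ^ 2 := by
    simp only [Fintype.sum_prod_type, trace, diag, mul_apply, transpose_apply, sq]
    exact Finset.sum_comm
  have hnorm : (u ⬝ᵥ u) ^ 2 = ∑ p : n × n, (u p.1 * u p.2) ^ 2 := by
    simp only [Fintype.sum_prod_type, dotProduct, sq, Finset.sum_mul_sum]
    exact Finset.sum_congr rfl fun i _ => Finset.sum_congr rfl fun j _ => by ring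
  rw [hquad, htrace, hnorm]
  exact Finset.sum_mul_sq_le_sq_mul_sq _ _ _

lemma PosSemidef.mul_mul_same_of_isSymm {Q S : Matrix n n ℝ} (hQ : Q.PosSemidef) (hS : S.IsSymm) :
    (S * Q * S).PosSemidef := by
  simpa only [conjTranspose_eq_transpose_of_trivial, hS.eq] using hQ.conjTranspose_mul_mul_same S

variable [DecidableEq n]

lemma isSymm_sqrt (Q : Matrix n n ℝ) : (CFC.sqrt Q).IsSymm :=
  isHermitian_iff_isSymm.mp (CFC.sqrt_nonneg Q).posSemidef.isHermitian

lemma PosSemidef.dotProduct_mulVec_eq_sqrt {Q : Matrix n n ℝ} (hQ : Q.PosSemidef) (u v : n → ℝ) :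
    u ⬝ᵥ Q *ᵥ v = (CFC.sqrt Q *ᵥ u) ⬝ᵥ (CFC.sqrt Q *ᵥ v) := by
  conv_lhs => rw [← CFC.sqrt_mul_sqrt_self Q hQ.nonneg]
  rw [← mulVec_mulVec, dotProduct_mulVec, ← mulVec_transpose, (isSymm_sqrt Q).eq]

lemma PosSemidef.sqrt_dotProduct_mulVec_self_eq_norm {Q : Matrix n n ℝ} (hQ : Q.PosSemidef)
    (v : n → ℝ) :
    √(v ⬝ᵥ Q *ᵥ v) = ‖WithLp.toLp 2 (CFC.sqrt Q *ᵥ v)‖ := by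
  rw [hQ.dotProduct_mulVec_eq_sqrt, sqrt_dotProduct_self_eq_norm]

lemma PosSemidef.trace_mul_nonneg {P Q : Matrix n n ℝ} (hP : P.PosSemidef) (hQ : Q.PosSemidef) :
    0 ≤ (P * Q).trace := by
  rw [← CFC.sqrt_mul_sqrt_self P hP.nonneg, mul_assoc, trace_mul_comm]
  exact (hQ.mul_mul_same_of_isSymm (isSymm_sqrt P)).trace_nonneg

lemma trace_mul_mul_mul_le_of_le {P₁ P₂ S : Matrix n n ℝ} (h₁ : P₁.PosSemidef) (h : P₁ ≤ P₂)
    (hS : S.IsSymm) : (P₁ * S * P₁ * S).trace ≤ (P₂ * S * P₂ * S).trace := by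
  rw [le_iff] at h
  have h₂ : P₂.PosSemidef := by simpa using h₁.add h
  have hdecomp : P₂ * S * P₂ * S - P₁ * S * P₁ * S
      = P₂ * (S * (P₂ - P₁) * S) + (P₂ - P₁) * (S * P₁ * S) := by noncomm_ring
  have := add_nonneg (h₂.trace_mul_nonneg (h.mul_mul_same_of_isSymm hS))
    (h.trace_mul_nonneg (h₁.mul_mul_same_of_isSymm hS))
  rw [← trace_add, ← hdecomp, trace_sub] at this
  linarith

lemma PosDef.two_mul_dotProduct_sub_le {P : Matrix n n ℝ} (hP : P.PosDef) (u w : n → ℝ) :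
    2 * (u ⬝ᵥ w) - u ⬝ᵥ P *ᵥ u ≤ w ⬝ᵥ P⁻¹ *ᵥ w := by
  set a := P⁻¹ *ᵥ w
  have hPa : P *ᵥ a = w := by
    rw [mulVec_mulVec, mul_nonsing_inv _ hP.det_pos.ne'.isUnit, one_mulVec]
  have hP' : P.IsSymm := isHermitian_iff_isSymm.mp hP.isHermitian
  have := hP.posSemidef.dotProduct_mulVec_nonneg (u - a)
  simp only [star_trivial, mulVec_sub, sub_dotProduct, dotProduct_sub, hPa] at this
  rw [hP'.dotProduct_mulVec_comm a u, hPa, dotProduct_comm a w] at this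
  linarith

lemma PosDef.inv_le_inv_of_le {A P : Matrix n n ℝ} (hA : A.PosDef) (h : A ≤ P) : P⁻¹ ≤ A⁻¹ := by
  -- `w ⬝ᵥ P⁻¹ *ᵥ w = max_u (2 u ⬝ᵥ w - u ⬝ᵥ P *ᵥ u)`, attained at `u = P⁻¹ *ᵥ w`
  have hP : P.PosDef := by simpa using hA.add_posSemidef (le_iff.mp h)
  rw [le_iff]
  refine PosSemidef.of_dotProduct_mulVec_nonneg
    (hA.inv.isHermitian.sub hP.inv.isHermitian) fun w => ?_
  set u := P⁻¹ *ᵥ w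
  have hPu : P *ᵥ u = w := by
    rw [mulVec_mulVec, mul_nonsing_inv _ hP.det_pos.ne'.isUnit, one_mulVec]
  have hvar := hA.two_mul_dotProduct_sub_le u w
  have hAP := (le_iff.mp h).dotProduct_mulVec_nonneg u
  simp only [star_trivial, sub_mulVec, dotProduct_sub, hPu] at hAP ⊢
  have : u ⬝ᵥ w = w ⬝ᵥ P⁻¹ *ᵥ w := dotProduct_comm _ _
  linarith

lemma PosDef.abs_dotProduct_mulVec_le {A M : Matrix n n ℝ} (hA : A.PosDef) (hM : M.IsSymm)
    (u : n → ℝ) : |u ⬝ᵥ M *ᵥ u| ≤ √(A⁻¹ * M * A⁻¹ * M).trace * (u ⬝ᵥ A *ᵥ u) := by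
  set C := CFC.sqrt A
  set B := CFC.sqrt A⁻¹
  have hC : C.IsSymm := isSymm_sqrt A
  have hB : B.IsSymm := isSymm_sqrt A⁻¹
  have hBB : B * B = A⁻¹ := CFC.sqrt_mul_sqrt_self _ hA.inv.posSemidef.nonneg
  have hCdet : IsUnit C.det :=
    (isUnit_iff_isUnit_det C).mp ((CFC.isUnit_sqrt_iff A hA.posSemidef.nonneg).mpr hA.isUnit)
  have hCinv : C⁻¹ = B := hA.posSemidef.inv_sqrt
  have hBC : B * C = 1 := hCinv ▸ nonsing_inv_mul C hCdet
  have hCB : C * B = 1 := hCinv ▸ mul_nonsing_inv C hCdet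
  set S := B * M * B
  have hMS : M = C * S * C := by
    simp only [S, ← mul_assoc, hCB, one_mul]
    rw [mul_assoc, hBC, mul_one]
  have hquad : u ⬝ᵥ M *ᵥ u = (C *ᵥ u) ⬝ᵥ S *ᵥ (C *ᵥ u) := by
    rw [hMS, ← mulVec_mulVec, ← mulVec_mulVec, dotProduct_mulVec, ← mulVec_transpose, hC.eq]
  have htrace : (A⁻¹ * M * A⁻¹ * M).trace = (Sᵀ * S).trace := by
    rw [show Sᵀ = S by simp [S, transpose_mul, hB.eq, hM.eq, mul_assoc], ← hBB]
    rw [show B * B * M * (B * B) * M = B * (B * M * B * B * M) by noncomm_ring,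
      trace_mul_comm]
    simp only [S]
    congr 1
    noncomm_ring
  have hnorm : u ⬝ᵥ A *ᵥ u = (C *ᵥ u) ⬝ᵥ (C *ᵥ u) := hA.posSemidef.dotProduct_mulVec_eq_sqrt u u
  have hnonneg : 0 ≤ (C *ᵥ u) ⬝ᵥ (C *ᵥ u) := hnorm ▸ hA.posSemidef.dotProduct_mulVec_nonneg u
  rw [hquad, hnorm, htrace, ← Real.sqrt_sq_eq_abs, ← Real.sqrt_sq hnonneg,
    ← Real.sqrt_mul' _ (sq_nonneg _)]
  exact Real.sqrt_le_sqrt (sq_dotProduct_mulVec_le S _)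

end Matrix

open Matrix

section Barrier

variable {U L : ℕ} (Lam : (Fin U → ℝ) →ₗ[ℝ] Matrix (Fin L) (Fin L) ℝ)

lemma lam_eq_sum_smul (u : Fin U → ℝ) : Lam u = ∑ i, u i • Lam (Pi.single i 1) := by
  conv_lhs => rw [← Finset.univ_sum_single u]
  simp only [map_sum, ← map_smul, ← Pi.single_smul, smul_eq_mul, mul_one]

lemma dotProduct_hess_mulVec (x v w : Fin U → ℝ) :
    v ⬝ᵥ hess Lam x *ᵥ w = ((Lam x)⁻¹ * Lam v * (Lam x)⁻¹ * Lam w).trace := by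
  simp only [lam_eq_sum_smul Lam v, lam_eq_sum_smul Lam w, Matrix.sum_mul,
    Matrix.mul_smul, Matrix.smul_mul, trace_sum, trace_smul, smul_eq_mul, dotProduct, mulVec,
    hess, of_apply, Finset.mul_sum]
  rw [Finset.sum_comm]
  exact Finset.sum_congr rfl fun i _ => Finset.sum_congr rfl fun j _ => by ring

lemma hess_isSymm (x : Fin U → ℝ) : (hess Lam x).IsSymm := by
  ext i j
  simp only [transpose_apply, hess, of_apply]
  rw [mul_assoc, trace_mul_comm, ← mul_assoc]

variable {Lam} (hsym : ∀ v, (Lam v).IsSymm) {x : Fin U → ℝ} (hx : (Lam x).PosDef)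
include hsym hx

lemma posSemidef_hess : (hess Lam x).PosSemidef := by
  refine PosSemidef.of_dotProduct_mulVec_nonneg
    (isHermitian_iff_isSymm.mpr (hess_isSymm Lam x)) fun v => ?_
  rw [star_trivial, dotProduct_hess_mulVec, mul_assoc, mul_assoc, ← mul_assoc (Lam v)]
  exact hx.inv.posSemidef.trace_mul_nonneg (hx.inv.posSemidef.mul_mul_same_of_isSymm (hsym v))

lemma locNorm_eq_norm_sqrt_hess_mulVec (v : Fin U → ℝ) :
    locNorm Lam x v = ‖WithLp.toLp 2 (CFC.sqrt (hess Lam x) *ᵥ v)‖ :=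
  (posSemidef_hess hsym hx).sqrt_dotProduct_mulVec_self_eq_norm v

lemma locNorm_add_le (v w : Fin U → ℝ) :
    locNorm Lam x (v + w) ≤ locNorm Lam x v + locNorm Lam x w := by
  simp only [locNorm_eq_norm_sqrt_hess_mulVec hsym hx, mulVec_add, WithLp.toLp_add]
  exact norm_add_le _ _

lemma locNorm_le_of_forall_sqrt_le {κ : ℝ}
    (h : ∀ R : Matrix (Fin U) (Fin U) ℝ, R.PosSemidef → R * R = hess Lam x →
      ∀ v : Fin U → ℝ, √(R *ᵥ v ⬝ᵥ R *ᵥ v) ≤ κ * √(v ⬝ᵥ v)) (v : Fin U → ℝ) :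
    locNorm Lam x v ≤ κ * √(v ⬝ᵥ v) := by
  have hH := posSemidef_hess hsym hx
  rw [locNorm, hH.dotProduct_mulVec_eq_sqrt]
  exact h _ (CFC.sqrt_nonneg _).posSemidef (CFC.sqrt_mul_sqrt_self _ hH.nonneg) v

lemma abs_dotProduct_lam_mulVec_le (d : Fin U → ℝ) (u : Fin L → ℝ) :
    |u ⬝ᵥ Lam d *ᵥ u| ≤ locNorm Lam x d * (u ⬝ᵥ Lam x *ᵥ u) := by
  rw [locNorm, dotProduct_hess_mulVec]
  exact hx.abs_dotProduct_mulVec_le (hsym d) u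

lemma smul_lam_le_lam_add (d : Fin U → ℝ) : (1 - locNorm Lam x d) • Lam x ≤ Lam (x + d) := by
  have hsymm : (Lam (x + d) - (1 - locNorm Lam x d) • Lam x).IsSymm :=
    (hsym _).sub ((hsym x).smul _)
  refine le_iff.mpr (PosSemidef.of_dotProduct_mulVec_nonneg
    (isHermitian_iff_isSymm.mpr hsymm) fun u => ?_)
  have hd := abs_dotProduct_lam_mulVec_le hsym hx d u
  simp only [star_trivial, map_add, sub_mulVec, add_mulVec, smul_mulVec, dotProduct_sub,
    dotProduct_add, dotProduct_smul, smul_eq_mul]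
  linarith [neg_abs_le (u ⬝ᵥ Lam d *ᵥ u)]

variable {d : Fin U → ℝ} (hd : locNorm Lam x d < 1)
include hd

lemma posDef_lam_add : (Lam (x + d)).PosDef := by
  simpa using (hx.smul (sub_pos.mpr hd)).add_posSemidef
    (le_iff.mp (smul_lam_le_lam_add hsym hx d))

lemma locNorm_lam_add_le (v : Fin U → ℝ) :
    locNorm Lam (x + d) v ≤ locNorm Lam x v / (1 - locNorm Lam x d) := by
  set s := 1 - locNorm Lam x d
  have hs : 0 < s := sub_pos.mpr hd
  have hinv : (Lam (x + d))⁻¹ ≤ s⁻¹ • (Lam x)⁻¹ := by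
    have hanti := (hx.smul hs).inv_le_inv_of_le (smul_lam_le_lam_add hsym hx d)
    have : Invertible s := invertibleOfNonzero hs.ne'
    rwa [inv_smul _ _ hx.det_pos.ne'.isUnit, invOf_eq_inv] at hanti
  have htrace := trace_mul_mul_mul_le_of_le (posDef_lam_add hsym hx hd).inv.posSemidef hinv
    (hsym v)
  simp only [smul_mul, Matrix.mul_smul, trace_smul, smul_eq_mul] at htrace
  rw [locNorm, locNorm, dotProduct_hess_mulVec, dotProduct_hess_mulVec, le_div_iff₀ hs,
    ← Real.sqrt_sq hs.le, ← Real.sqrt_mul' _ (sq_nonneg s)]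
  refine Real.sqrt_le_sqrt ?_
  calc _ ≤ s⁻¹ * (s⁻¹ * ((Lam x)⁻¹ * Lam v * (Lam x)⁻¹ * Lam v).trace) * s ^ 2 := by gcongr
    _ = _ := by field_simp

end Barrier

/-- The operator-norm bound on `H(x)^{1/2}` is phrased for the positive semidefinite square root
`R` of `H(x)`; Euclidean norms on `Fin U → ℝ` are written `Real.sqrt (v ⬝ᵥ v)`. -/
theorem stmt17_general {U L : ℕ} (hU : 0 < U)
    (Lam : (Fin U → ℝ) →ₗ[ℝ] Matrix (Fin L) (Fin L) ℝ)
    (hsym : ∀ v, (Lam v).IsSymm)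
    (x y : Fin U → ℝ) (hx : (Lam x).PosDef)
    (r₁ r₂ : ℝ) (hr₁0 : 0 ≤ r₁) (hr₁₂ : r₁ < r₂)
    (hxy : locNorm Lam x (x - y) ≤ r₁)
    (N : ℝ) (hN : 0 < N)
    (hsq : ∀ R : Matrix (Fin U) (Fin U) ℝ, R.PosSemidef → R * R = hess Lam x →
      ∀ v : Fin U → ℝ, Real.sqrt (R.mulVec v ⬝ᵥ R.mulVec v)
        ≤ (2 * N / Real.sqrt U) * ((r₂ - r₁) / (1 + r₂)) * Real.sqrt (v ⬝ᵥ v))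
    (xN : Fin U → ℝ)
    (hxN : Real.sqrt ((xN - x) ⬝ᵥ (xN - x)) ≤ Real.sqrt U / (2 * N)) :
    (Lam xN).PosDef ∧ locNorm Lam xN (xN - y) ≤ r₂ := by
  obtain ⟨d, rfl⟩ : ∃ d, xN = x + d := ⟨xN - x, (add_sub_cancel x xN).symm⟩
  rw [add_sub_cancel_left] at hxN
  have hr₂ : 0 < 1 + r₂ := by linarith
  have ht : locNorm Lam x d ≤ (r₂ - r₁) / (1 + r₂) := by
    have hU' : 0 < √(U : ℝ) := Real.sqrt_pos.mpr (by exact_mod_cast hU)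
    calc locNorm Lam x d ≤ 2 * N / √U * ((r₂ - r₁) / (1 + r₂)) * √(d ⬝ᵥ d) :=
          locNorm_le_of_forall_sqrt_le hsym hx hsq d
      _ ≤ 2 * N / √U * ((r₂ - r₁) / (1 + r₂)) * (√U / (2 * N)) := by gcongr
      _ = (r₂ - r₁) / (1 + r₂) := by field_simp
  set t := locNorm Lam x d
  have ht1 : t < 1 := ht.trans_lt ((div_lt_one hr₂).mpr (by linarith))
  refine ⟨posDef_lam_add hsym hx ht1, ?_⟩
  have htri : locNorm Lam x (x + d - y) ≤ t + r₁ := by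
    rw [show x + d - y = d + (x - y) by abel]
    exact (locNorm_add_le hsym hx d (x - y)).trans (add_le_add le_rfl hxy)
  calc locNorm Lam (x + d) (x + d - y) ≤ locNorm Lam x (x + d - y) / (1 - t) :=
        locNorm_lam_add_le hsym hx ht1 _
    _ ≤ (t + r₁) / (1 - t) := by gcongr
    _ ≤ r₂ := by
      rw [div_le_iff₀ (by linarith), ← sub_nonneg]
      have := (le_div_iff₀ hr₂).mp ht
      nlinarith

/-- rounding certificates. The bound on the operator 2-norm of
`H(x)^{1/2}` is phrased for the (unique) positive semidefinite square root `R`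
of `H(x)`; Euclidean norms on `Fin U → ℝ` are written `Real.sqrt (v ⬝ᵥ v)`. -/
theorem stmt17 {U L : ℕ} (hU : 0 < U) (hL : 0 < L)
    (Lam : (Fin U → ℝ) →ₗ[ℝ] Matrix (Fin L) (Fin L) ℝ)
    (hinj : Function.Injective Lam) (hsym : ∀ v, (Lam v).IsSymm)
    (x y : Fin U → ℝ) (hx : (Lam x).PosDef)
    (r₁ r₂ : ℝ) (hr₁0 : 0 ≤ r₁) (hr₁₂ : r₁ < r₂) (hr₁ : r₁ < 1 / 2)
    (hxy : locNorm Lam x (x - y) ≤ r₁)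
    (N : ℝ) (hN : 0 < N)
    (hsq : ∀ R : Matrix (Fin U) (Fin U) ℝ, R.PosSemidef → R * R = hess Lam x →
      ∀ v : Fin U → ℝ, Real.sqrt (R.mulVec v ⬝ᵥ R.mulVec v)
        ≤ (2 * N / Real.sqrt U) * ((r₂ - r₁) / (1 + r₂)) * Real.sqrt (v ⬝ᵥ v))
    (xN : Fin U → ℝ)
    (hxN : Real.sqrt ((xN - x) ⬝ᵥ (xN - x)) ≤ Real.sqrt U / (2 * N)) :
    (Lam xN).PosDef ∧ locNorm Lam xN (xN - y) ≤ r₂ :=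
  stmt17_general hU Lam hsym x y hx r₁ r₂ hr₁0 hr₁₂ hxy N hN hsq xN hxN
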